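/- arXiv:2307.08854 — 6 statements merged into one kernel-verified Lean document; each statement's English description precedes it below -/
import Mathlib

section
/- Let E be a finite set partitioned into blocks E_1, …, E_ℓ with nonnegative integers k_1, …, k_ℓ, and let I = {X ⊆ E : |X ∩ E_i| ≤ k_i for all i ∈ [ℓ]} be the independence family of the corresponding partition matroid. Let S be a family of sets in I, each of size exactly p, and let ℓ' ≥ 0. Then there exists a subfamily Ŝ ⊆ S that is ℓ'-representative for S (with respect to I) and satisfies |Ŝ| ≤ C(p + ℓ', p). -/
/-- Independence in the partition matroid with blocks `Eb i` and capacities `kb i`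
on the ground set `E`. -/
def PartIndep {α : Type*} [DecidableEq α] (E : Finset α) {ℓ : ℕ}
    (Eb : Fin ℓ → Finset α) (kb : Fin ℓ → ℕ) (X : Finset α) : Prop :=
  X ⊆ E ∧ ∀ i, (X ∩ Eb i).card ≤ kb i

/-!
Lovász's exterior-algebra argument. Put `n = p + ℓ'` and give every element `e` of block `i` the
vector `u e ∈ Kⁿ`, a generic combination of `kᵢ` generic vectors, over a field `K` of rational
functions. A set of at most `n` elements then has independent vectors iff it respects the
capacities: dependence is forced by the `kᵢ`-dimensional span of a block, and independence is
witnessed by a specialization turning the vectors into distinct unit vectors.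

Over a field, `X ∩ Y = ∅` with `u` independent on `X ∪ Y` iff `(⋀ u X) ∧ (⋀ u Y) ≠ 0`. The wedges
`⋀ u X`, `X ∈ S`, lie in `⋀ᵖ Kⁿ`, of dimension `C(n, p)`, so at most `C(n, p)` of them span all
the others; since `ω ↦ ω ∧ (⋀ u Y)` is linear, one of these survives whenever some `⋀ u X` does.
-/

open Function Module Finset

theorem Fin.range_append {α : Type*} {m n : ℕ} (f : Fin m → α) (g : Fin n → α) :
    Set.range (Fin.append f g) = Set.range f ∪ Set.range g := by
  ext x
  constructor
  · rintro ⟨i, rfl⟩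
    induction i using Fin.addCases <;> simp
  · rintro (⟨i, rfl⟩ | ⟨i, rfl⟩)
    exacts [⟨castAdd n i, append_left f g i⟩, ⟨natAdd m i, append_right f g i⟩]

theorem Fin.comp_append {α β : Type*} {m n : ℕ} (u : α → β) (f : Fin m → α) (g : Fin n → α) :
    u ∘ Fin.append f g = Fin.append (u ∘ f) (u ∘ g) := by
  funext i
  induction i using Fin.addCases <;> simp

section Wedge

variable {K E : Type*} [Field K] [AddCommGroup E] [Module K E]

theorem linearIndependent_comp_iff {ι κ : Type*} {u : ι → E} {a : κ → ι} :
    LinearIndependent K (u ∘ a) ↔ Injective a ∧ LinearIndepOn K u (Set.range a) :=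
  ⟨fun h => ⟨h.injective.of_comp, (linearIndepOn_range_iff h.injective.of_comp u).2 h⟩,
    fun ⟨ha, h⟩ => (linearIndepOn_range_iff ha u).1 h⟩

theorem ExteriorAlgebra.ιMulti_ne_zero_iff {m : ℕ} {v : Fin m → E} :
    ιMulti K m v ≠ 0 ↔ LinearIndependent K v := by
  refine ⟨fun h => by_contra fun hv => h ((ιMulti K m).map_linearDependent v hv), fun hv => ?_⟩
  have h := (exteriorPower.ιMulti_family_linearIndependent_field m hv).ne_zero
    (Set.powersetCard.ofFinEmbEquiv (RelEmbedding.refl (· ≤ ·)))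
  rwa [Ne, ← Submodule.coe_eq_zero, exteriorPower.ιMulti_family_apply_coe, ιMulti_family,
    Equiv.symm_apply_apply] at h

theorem exists_subset_card_le_finrank_forall_mem_span {ι : Type*} (w : ι → E) (W : Submodule K E)
    [FiniteDimensional K W] (S : Finset ι) (hS : ∀ i ∈ S, w i ∈ W) :
    ∃ T ⊆ S, #T ≤ finrank K W ∧ ∀ i ∈ S, w i ∈ Submodule.span K (w '' T) := by
  obtain ⟨b, hbS, -, hspan, hb⟩ :=
    exists_linearIndepOn_extension (linearIndepOn_empty K w) (Set.empty_subset (S : Set ι))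
  have hfin : b.Finite := S.finite_toSet.subset hbS
  refine ⟨hfin.toFinset, by simpa using hbS, ?_, ?_⟩
  · have hli : LinearIndependent K fun x : b => (⟨w x, hS x (hbS x.2)⟩ : W) :=
      .of_comp W.subtype hb
    rw [← Set.ncard_eq_toFinset_card b hfin, ← Nat.cast_le (α := Cardinal), Set.cast_ncard hfin]
    exact hli.cardinalMk_le_finrank
  · intro i hi
    simpa using hspan ⟨i, hi, rfl⟩

variable (K) in
/-- The order of the enumeration of `X` only affects the sign. -/
noncomputable def wedge {α : Type*} (u : α → E) (X : Finset α) : ExteriorAlgebra K E :=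
  ExteriorAlgebra.ιMulti K #X (u ∘ (↑) ∘ X.equivFin.symm)

theorem wedge_mem_exteriorPower {α : Type*} (u : α → E) (X : Finset α) :
    wedge K u X ∈ ⋀[K]^#X E :=
  ExteriorAlgebra.ιMulti_range K #X ⟨_, rfl⟩

theorem wedge_mul_wedge_ne_zero_iff {α : Type*} [DecidableEq α] {u : α → E} {X Y : Finset α} :
    wedge K u X * wedge K u Y ≠ 0 ↔ Disjoint X Y ∧ LinearIndepOn K u ↑(X ∪ Y) := by
  set eX : Fin #X → α := (↑) ∘ X.equivFin.symm
  set eY : Fin #Y → α := (↑) ∘ Y.equivFin.symm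
  have heX : Injective eX := Subtype.val_injective.comp X.equivFin.symm.injective
  have heY : Injective eY := Subtype.val_injective.comp Y.equivFin.symm.injective
  have hrX : Set.range eX = X := by simp [eX, Set.range_comp]
  have hrY : Set.range eY = Y := by simp [eY, Set.range_comp]
  rw [wedge, wedge, ExteriorAlgebra.ιMulti_mul_ιMulti, ← Fin.comp_append,
    ExteriorAlgebra.ιMulti_ne_zero_iff, linearIndependent_comp_iff, Fin.append_injective_iff,
    ← Set.disjoint_range_iff, Fin.range_append, hrX, hrY, disjoint_coe, coe_union]
  exact ⟨fun h => ⟨h.1.2.2, h.2⟩, fun h => ⟨⟨heX, heY, h.1⟩, h.2⟩⟩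

variable (K) in
theorem exists_linearIndepOn_representative [FiniteDimensional K E] {α : Type*} [DecidableEq α]
    (u : α → E) (S : Finset (Finset α)) {p : ℕ} (hS : ∀ X ∈ S, #X = p) :
    ∃ T ⊆ S, #T ≤ (finrank K E).choose p ∧ ∀ Y : Finset α,
      (∃ X ∈ S, Disjoint X Y ∧ LinearIndepOn K u ↑(X ∪ Y)) →
        ∃ X ∈ T, Disjoint X Y ∧ LinearIndepOn K u ↑(X ∪ Y) := by
  obtain ⟨T, hTS, hTcard, hspan⟩ :=
    exists_subset_card_le_finrank_forall_mem_span (wedge K u) (⋀[K]^p E) S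
      fun X hX => hS X hX ▸ wedge_mem_exteriorPower u X
  refine ⟨T, hTS, hTcard.trans_eq (exteriorPower.finrank_eq K p), fun Y ⟨X, hXS, hXY⟩ => ?_⟩
  simp_rw [← wedge_mul_wedge_ne_zero_iff] at hXY ⊢
  by_contra! hT
  have hker : Submodule.span K (wedge K u '' T) ≤
      LinearMap.ker (LinearMap.mulRight K (wedge K u Y)) :=
    Submodule.span_le.2 (by rintro _ ⟨X', hX', rfl⟩; exact hT X' hX')
  exact hXY (hker (hspan X hXS))

end Wedge

theorem Finset.exists_injOn_lt_of_card_le {α : Type*} {s : Finset α} {m : ℕ} (h : #s ≤ m) :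
    ∃ f : α → ℕ, Set.InjOn f s ∧ ∀ a ∈ s, f a < m := by
  obtain ⟨f, hf, hinj⟩ := s.finite_toSet.exists_injOn_of_encard_le (t := (range m : Set ℕ))
    (by simpa only [Set.encard_coe_eq_coe_finsetCard, card_range, Nat.cast_le] using h)
  exact ⟨f, hinj, fun a ha => by simpa using hf ha⟩

theorem Matrix.linearIndependent_rows_map_of_map_eq_one {R S K m : Type*} [CommRing R]
    [CommRing S] [Nontrivial S] [Field K] [Fintype m] [DecidableEq m] {A : Matrix m m R}
    {φ : R →+* S} (hφ : A.map φ = 1) {ψ : R →+* K} (hψ : Injective ψ) :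
    LinearIndependent K fun i => A.map ψ i := by
  have hA : A.det ≠ 0 := fun h => by simpa [h, hφ] using φ.map_det A
  refine linearIndependent_rows_of_det_ne_zero ?_
  rw [← RingHom.mapMatrix_apply, ← ψ.map_det]
  exact (map_ne_zero_iff ψ hψ).2 hA

section GenericRepresentation

variable (α ι : Type*) (n : ℕ)

/-- The indeterminate `x (e, j)` is the coordinate of `e` along `g (blk e, j, ·) ∈ Kⁿ`, the `j`-th
generic vector spanning the subspace of the block of `e`. -/
abbrev GenericRing := MvPolynomial ((α × ℕ) ⊕ (ι × ℕ × Fin n)) ℚ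

abbrev GenericField := FractionRing (GenericRing α ι n)

open MvPolynomial

noncomputable def genericBlockVec (i : ι) (j : ℕ) : Fin n → GenericField α ι n :=
  fun c => algebraMap (GenericRing α ι n) _ (X (Sum.inr (i, j, c)))

variable {α ι}

noncomputable def genericPoly (blk : α → ι) (k : ι → ℕ) (e : α) : Fin n → GenericRing α ι n :=
  fun c => ∑ j ∈ range (k (blk e)), X (Sum.inl (e, j)) * X (Sum.inr (blk e, j, c))

noncomputable def genericVec (blk : α → ι) (k : ι → ℕ) (e : α) : Fin n → GenericField α ι n :=
  algebraMap _ _ ∘ genericPoly n blk k e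

variable {n}

theorem genericVec_mem_span (blk : α → ι) (k : ι → ℕ) (e : α) :
    genericVec n blk k e ∈ Submodule.span (GenericField α ι n)
      (Set.range fun j : Fin (k (blk e)) => genericBlockVec α ι n (blk e) j) := by
  have : genericVec n blk k e = ∑ j : Fin (k (blk e)),
      (X (Sum.inl (e, j)) : GenericRing α ι n) • genericBlockVec α ι n (blk e) j := by
    funext c
    simp [genericVec, genericPoly, genericBlockVec, Finset.sum_apply, Finset.sum_range,
      Algebra.smul_def]
  rw [this]
  exact Submodule.sum_mem _ fun j _ =>
    Submodule.smul_of_tower_mem _ _ (Submodule.subset_span (Set.mem_range_self j))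

theorem card_filter_le_of_linearIndepOn [DecidableEq ι] {blk : α → ι} {k : ι → ℕ} {T : Finset α}
    (hT : LinearIndepOn (GenericField α ι n) (genericVec n blk k) ↑T) (i : ι) :
    #{e ∈ T | blk e = i} ≤ k i := by
  classical
  have hspan : Set.range (fun e : {e ∈ T | blk e = i} => genericVec n blk k e) ≤
      Submodule.span (GenericField α ι n)
        (Set.range fun j : Fin (k i) => genericBlockVec α ι n i j) := by
    rintro _ ⟨⟨e, he⟩, rfl⟩
    obtain rfl := (mem_filter.1 he).2
    exact genericVec_mem_span blk k e
  calc #{e ∈ T | blk e = i}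
      = Fintype.card {e ∈ T | blk e = i} := (Fintype.card_coe _).symm
    _ ≤ Fintype.card (Set.range fun j : Fin (k i) => genericBlockVec α ι n i j) :=
      linearIndependent_le_span_aux' _ (hT.mono fun e he => (mem_filter.1 he).1) _ hspan
    _ ≤ k i := (Fintype.card_range_le _).trans_eq (Fintype.card_fin _)

theorem linearIndepOn_genericVec [DecidableEq ι] {blk : α → ι} {k : ι → ℕ} {T : Finset α}
    (hTn : #T ≤ n) (hTk : ∀ i, #{e ∈ T | blk e = i} ≤ k i) :
    LinearIndepOn (GenericField α ι n) (genericVec n blk k) ↑T := by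
  classical
  choose slot hslot_inj hslot_lt using fun i => exists_injOn_lt_of_card_le (hTk i)
  let coord : T → Fin n := Fin.castLE hTn ∘ T.equivFin
  have hcoord : Injective coord := (Fin.castLE_injective hTn).comp T.equivFin.injective
  -- a specialization sending the generic vector of `e ∈ T` to the `coord e`-th unit vector
  let pt : (α × ℕ) ⊕ (ι × ℕ × Fin n) → ℚ := Sum.elim
    (fun x => if x.2 = slot (blk x.1) x.1 then 1 else 0)
    (fun y => if ∃ e : T, blk e = y.1 ∧ slot y.1 e = y.2.1 ∧ coord e = y.2.2 then 1 else 0)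
  have heval (e e' : T) : eval pt (genericPoly n blk k e (coord e')) = if e = e' then 1 else 0 := by
    have he : (e : α) ∈ ({x ∈ T | blk x = blk e} : Finset α) := mem_filter.2 ⟨e.2, rfl⟩
    simp only [genericPoly, map_sum, map_mul, eval_X, pt, Sum.elim_inl, Sum.elim_inr, ite_mul,
      one_mul, zero_mul, sum_ite_eq', mem_range, hslot_lt _ _ he, if_true]
    refine if_congr ⟨fun ⟨e'', hblk, hslot, hc⟩ => ?_, fun h => ⟨e, rfl, rfl, h ▸ rfl⟩⟩ rfl rfl
    have : (e'' : α) = e := hslot_inj _ (mem_filter.2 ⟨e''.2, hblk⟩) he hslot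
    exact Subtype.ext this ▸ hcoord hc
  let A : Matrix T T (GenericRing α ι n) := fun e e' => genericPoly n blk k e (coord e')
  have hA : A.map (eval pt) = 1 := by
    ext e e'
    rw [Matrix.map_apply, Matrix.one_apply]
    exact heval e e'
  exact .of_comp (LinearMap.funLeft _ _ coord)
    (Matrix.linearIndependent_rows_map_of_map_eq_one hA (IsFractionRing.injective _ _))

theorem linearIndepOn_genericVec_iff [DecidableEq ι] {blk : α → ι} {k : ι → ℕ} {T : Finset α}
    (hTn : #T ≤ n) :
    LinearIndepOn (GenericField α ι n) (genericVec n blk k) ↑T ↔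
      ∀ i, #{e ∈ T | blk e = i} ≤ k i :=
  ⟨card_filter_le_of_linearIndepOn, linearIndepOn_genericVec hTn⟩

end GenericRepresentation

section PartitionMatroid

variable {α : Type*} {ℓ : ℕ}

noncomputable def blockOf [DecidableEq α] (Eb : Fin ℓ → Finset α) (e : α) : Option (Fin ℓ) :=
  if h : ∃ i, e ∈ Eb i then some h.choose else none

theorem blockOf_eq_some_iff [DecidableEq α] {Eb : Fin ℓ → Finset α}
    (hdisj : ∀ i j, i ≠ j → Disjoint (Eb i) (Eb j)) {e : α} {i : Fin ℓ} :
    blockOf Eb e = some i ↔ e ∈ Eb i := by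
  unfold blockOf
  split_ifs with h
  · refine ⟨fun hi => Option.some_injective _ hi ▸ h.choose_spec, fun hi => ?_⟩
    by_contra hne
    exact disjoint_left.1 (hdisj _ _ fun h' => hne (congrArg some h')) h.choose_spec hi
  · exact ⟨nofun, fun hi => h ⟨i, hi⟩⟩

theorem partIndep_iff [DecidableEq α] {E : Finset α} {Eb : Fin ℓ → Finset α} {kb : Fin ℓ → ℕ}
    (hdisj : ∀ i j, i ≠ j → Disjoint (Eb i) (Eb j)) (hcover : univ.biUnion Eb = E)
    {T : Finset α} (hT : T ⊆ E) :
    PartIndep E Eb kb T ↔ ∀ o, #{e ∈ T | blockOf Eb e = o} ≤ o.elim 0 kb := by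
  simp only [PartIndep, hT, true_and, Option.forall, Option.elim_none, Option.elim_some,
    Nat.le_zero, card_eq_zero, filter_eq_empty_iff]
  have hnone : ∀ e ∈ T, blockOf Eb e ≠ none := fun e he => by
    obtain ⟨i, -, hi⟩ := mem_biUnion.1 (hcover ▸ hT he)
    simp [(blockOf_eq_some_iff hdisj).2 hi]
  have hsome (i : Fin ℓ) : {e ∈ T | blockOf Eb e = some i} = T ∩ Eb i := by
    ext e
    simp [blockOf_eq_some_iff hdisj]
  simp only [hsome]
  exact (and_iff_right hnone).symm

end PartitionMatroid

/-- For a `p`-family `S` of independent sets of a partition matroid and any `ℓ' ≥ 0`,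
there is an `ℓ'`-representative subfamily `Ŝ ⊆ S` of size at most `C(p + ℓ', p)`. -/
theorem stmt_1 {α : Type*} [DecidableEq α]
    (E : Finset α) (ℓ : ℕ) (Eb : Fin ℓ → Finset α) (kb : Fin ℓ → ℕ)
    (hdisj : ∀ i j, i ≠ j → Disjoint (Eb i) (Eb j))
    (hcover : Finset.univ.biUnion Eb = E)
    (S : Finset (Finset α)) (p ℓ' : ℕ)
    (hcard : ∀ X ∈ S, X.card = p)
    (hindep : ∀ X ∈ S, PartIndep E Eb kb X) :
    ∃ Shat ⊆ S, Shat.card ≤ (p + ℓ').choose p ∧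
      ∀ Y : Finset α, Y ⊆ E → Y.card ≤ ℓ' →
        (∃ X ∈ S, Disjoint X Y ∧ PartIndep E Eb kb (X ∪ Y)) →
        ∃ X' ∈ Shat, Disjoint X' Y ∧ PartIndep E Eb kb (X' ∪ Y) := by
  let K := GenericField α (Option (Fin ℓ)) (p + ℓ')
  let u := genericVec (p + ℓ') (blockOf Eb) (Option.elim · 0 kb)
  have hindep_iff {X Y : Finset α} (hX : X ∈ S) (hY : Y ⊆ E) (hYl : #Y ≤ ℓ') (hXY : Disjoint X Y) :
      PartIndep E Eb kb (X ∪ Y) ↔ LinearIndepOn K u ↑(X ∪ Y) := by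
    have hcardXY : #(X ∪ Y) ≤ p + ℓ' := by
      rw [card_union_of_disjoint hXY, hcard X hX]
      omega
    rw [partIndep_iff hdisj hcover (union_subset (hindep X hX).1 hY),
      linearIndepOn_genericVec_iff hcardXY]
  obtain ⟨Shat, hShat, hcard_le, hrep⟩ := exists_linearIndepOn_representative K u S hcard
  rw [finrank_fin_fun] at hcard_le
  refine ⟨Shat, hShat, hcard_le, fun Y hY hYl ⟨X, hX, hXY, hXYind⟩ => ?_⟩
  obtain ⟨X', hX', hX'Y, hX'Yind⟩ := hrep Y ⟨X, hX, hXY, (hindep_iff hX hY hYl hXY).1 hXYind⟩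
  exact ⟨X', hX', hX'Y, (hindep_iff (hShat hX') hY hYl hX'Y).2 hX'Yind⟩
end

section
/- Let (U, F, B, f, k) be a Fair Hitting Set instance in which F = {F_1, …, F_m} consists of pairwise disjoint sets and every element of U belongs to at most q sets of B. Fix i ∈ [m] and j ∈ [q], let F_i^emb = {copies(u) : u ∈ F_i}, and let Ŝ be a (qk − j)-representative family for F_i^emb[j] (the sets of F_i^emb of size exactly j) with respect to the partition matroid M. Suppose u ∈ F_i satisfies |copies(u)| = j and copies(u) ∉ Ŝ. Then (U, F, B, f, k) admits a fair hitting set if and only if the reduced instance obtained by removing u — namely (U \ {u}, {F' \ {u} : F' ∈ F}, (B' \ {u})_{B' ∈ B}, f unchanged on corresponding sets, k) — admits a fair hitting set. -/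
variable {α : Type*} [DecidableEq α]

/-- The ground set of the partition matroid for an indexed family `B`:
Ũ = {(u, j) : u ∈ U, u ∈ B j}. -/
def tildeU (U : Finset α) {ℓ : ℕ} (B : Fin ℓ → Finset α) : Finset (α × Fin ℓ) :=
  (U ×ˢ Finset.univ).filter fun p => p.1 ∈ B p.2

/-- `copies u`: the copies of `u` in Ũ (one for each set of `B` containing `u`). -/
def copies (U : Finset α) {ℓ : ℕ} (B : Fin ℓ → Finset α) (u : α) : Finset (α × Fin ℓ) :=
  (tildeU U B).filter fun p => p.1 = u

/-- Independence in the partition matroid M. -/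
def MatIndep (U : Finset α) {ℓ : ℕ} (B : Fin ℓ → Finset α) (f : Fin ℓ → ℕ)
    (X : Finset (α × Fin ℓ)) : Prop :=
  X ⊆ tildeU U B ∧ ∀ j, (X.filter fun p => p.2 = j).card ≤ f j

/-- `Shat` is an `ℓ'`-representative subfamily of `S` with respect to the independence
notion `Ind` on ground set `E`. -/
def IsRepFam {β : Type*} [DecidableEq β] (E : Finset β) (Ind : Finset β → Prop) (ℓ' : ℕ)
    (Shat S : Set (Finset β)) : Prop :=
  Shat ⊆ S ∧ ∀ Y : Finset β, Y ⊆ E → Y.card ≤ ℓ' →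
    (∃ X ∈ S, Disjoint X Y ∧ Ind (X ∪ Y)) →
    ∃ X ∈ Shat, Disjoint X Y ∧ Ind (X ∪ Y)

lemma mem_copies {U : Finset α} {ℓ : ℕ} {B : Fin ℓ → Finset α} {u : α} {p : α × Fin ℓ} :
    p ∈ copies U B u ↔ p.1 = u ∧ u ∈ U ∧ u ∈ B p.2 := by
  simp only [copies, tildeU, Finset.mem_filter, Finset.mem_product, Finset.mem_univ, and_true]
  constructor
  · rintro ⟨⟨h1, h2⟩, rfl⟩; exact ⟨rfl, h1, h2⟩
  · rintro ⟨rfl, h1, h2⟩; exact ⟨⟨h1, h2⟩, rfl⟩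

lemma copies_subset {U : Finset α} {ℓ : ℕ} {B : Fin ℓ → Finset α} (u : α) :
    copies U B u ⊆ tildeU U B := Finset.filter_subset _ _

lemma card_copies_le {U : Finset α} {ℓ : ℕ} {B : Fin ℓ → Finset α} {q : ℕ}
    (hq : ∀ u ∈ U, (Finset.univ.filter fun j : Fin ℓ => u ∈ B j).card ≤ q) (u : α) :
    (copies U B u).card ≤ q := by
  rcases (copies U B u).eq_empty_or_nonempty with h | ⟨p, hp⟩
  · simp [h]
  · have huU : u ∈ U := (mem_copies.1 hp).2.1
    have hsub : copies U B u ⊆ (Finset.univ.filter fun j : Fin ℓ => u ∈ B j).image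
        (fun j => (u, j)) := by
      intro p hp'
      rw [mem_copies] at hp'
      refine Finset.mem_image.2 ⟨p.2, ?_, ?_⟩
      · simp [hp'.2.2]
      · obtain ⟨h1, _, _⟩ := hp'; exact Prod.ext h1.symm rfl
    calc (copies U B u).card ≤ _ := Finset.card_le_card hsub
      _ ≤ (Finset.univ.filter fun j : Fin ℓ => u ∈ B j).card := Finset.card_image_le
      _ ≤ q := hq u huU

lemma embed_filter {U : Finset α} {ℓ : ℕ} {B : Fin ℓ → Finset α} {S : Finset α}
    (hS : S ⊆ U) (j' : Fin ℓ) :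
    ((S.biUnion (copies U B)).filter fun p => p.2 = j')
      = (S ∩ B j').image (fun w => (w, j')) := by
  ext p
  simp only [Finset.mem_filter, Finset.mem_biUnion, Finset.mem_image, Finset.mem_inter]
  constructor
  · rintro ⟨⟨w, hwS, hp⟩, rfl⟩
    rw [mem_copies] at hp
    exact ⟨w, ⟨hwS, hp.1 ▸ hp.2.2⟩, Prod.ext hp.1.symm rfl⟩
  · rintro ⟨w, ⟨hwS, hwB⟩, rfl⟩
    exact ⟨⟨w, hwS, mem_copies.2 ⟨rfl, hS hwS, hwB⟩⟩, rfl⟩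

lemma embed_filter_card {U : Finset α} {ℓ : ℕ} {B : Fin ℓ → Finset α} {S : Finset α}
    (hS : S ⊆ U) (j' : Fin ℓ) :
    ((S.biUnion (copies U B)).filter fun p => p.2 = j').card = (S ∩ B j').card := by
  rw [embed_filter hS j']
  exact Finset.card_image_of_injective _ (fun a b h => (Prod.ext_iff.1 h).1)


/-- Soundness of the element-deletion reduction rule based on representative sets:
if `copies u` has size `j` and does not belong to a `(qk − j)`-representative family
for the size-`j` sets of `F_i^emb`, then `u` can be deleted from the instance. -/
theorem stmt_4 {m ℓ : ℕ} (U : Finset α) (F : Fin m → Finset α)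
    (B : Fin ℓ → Finset α) (f : Fin ℓ → ℕ) (k q : ℕ)
    (hFsub : ∀ a, F a ⊆ U) (hBsub : ∀ j, B j ⊆ U)
    (hFdisj : ∀ a b : Fin m, a ≠ b → Disjoint (F a) (F b))
    (hq : ∀ u ∈ U, (Finset.univ.filter fun j : Fin ℓ => u ∈ B j).card ≤ q)
    (i : Fin m) (j : ℕ) (hj1 : 1 ≤ j) (hjq : j ≤ q)
    (Shat : Set (Finset (α × Fin ℓ)))
    (hrep : IsRepFam (tildeU U B) (MatIndep U B f) (q * k - j) Shat
        {X | ∃ u ∈ F i, X = copies U B u ∧ X.card = j})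
    (u : α) (hu : u ∈ F i) (hucard : (copies U B u).card = j)
    (hunot : copies U B u ∉ Shat) :
    (∃ S : Finset α, S ⊆ U ∧ S.card ≤ k ∧ (∀ a, (S ∩ F a).Nonempty) ∧
        ∀ j', (S ∩ B j').card ≤ f j') ↔
    (∃ S : Finset α, S ⊆ U.erase u ∧ S.card ≤ k ∧
        (∀ a, (S ∩ (F a).erase u).Nonempty) ∧
        ∀ j', (S ∩ (B j').erase u).card ≤ f j') := by

  constructor
  · rintro ⟨S, hSU, hSk, hhit, hfair⟩
    by_cases huS : u ∈ S
    · -- replace u by a representative element v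
      set Y : Finset (α × Fin ℓ) := (S.erase u).biUnion (copies U B) with hYdef
      have hSerU : S.erase u ⊆ U := (Finset.erase_subset _ _).trans hSU
      have hYsub : Y ⊆ tildeU U B := by
        intro p hp
        obtain ⟨w, _, hpw⟩ := Finset.mem_biUnion.1 hp
        exact copies_subset w hpw
      have hk1 : 1 ≤ k := le_trans (Finset.card_pos.2 ⟨u, huS⟩) hSk
      have hYcard : Y.card ≤ q * k - j := by
        have h1 : Y.card ≤ (S.erase u).card * q := by
          calc Y.card ≤ ∑ w ∈ S.erase u, (copies U B w).card := Finset.card_biUnion_le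
            _ ≤ ∑ _w ∈ S.erase u, q := Finset.sum_le_sum fun w _ => card_copies_le hq w
            _ = (S.erase u).card * q := by rw [Finset.sum_const, smul_eq_mul]
        have h2 : (S.erase u).card = S.card - 1 := Finset.card_erase_of_mem huS
        have h3 : S.card ≥ 1 := Finset.card_pos.2 ⟨u, huS⟩
        have h4 : (S.card - 1) * q + q = S.card * q := by
          have : S.card - 1 + 1 = S.card := Nat.succ_pred_eq_of_pos h3
          calc (S.card - 1) * q + q = (S.card - 1 + 1) * q := by ring
            _ = S.card * q := by rw [this]
        have h5 : S.card * q ≤ k * q := Nat.mul_le_mul_right q hSk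
        have h6 : k * q = q * k := Nat.mul_comm k q
        rw [h2] at h1
        omega
      have hdisj : Disjoint (copies U B u) Y := by
        rw [Finset.disjoint_left]
        intro p hpu hpY
        obtain ⟨w, hwS, hpw⟩ := Finset.mem_biUnion.1 hpY
        have h1 := (mem_copies.1 hpu).1
        have h2 := (mem_copies.1 hpw).1
        exact (Finset.ne_of_mem_erase hwS) (h2.symm.trans h1)
      have hunion : copies U B u ∪ Y = S.biUnion (copies U B) := by
        rw [hYdef, ← Finset.biUnion_insert, Finset.insert_erase huS]
      have hind : MatIndep U B f (copies U B u ∪ Y) := by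
        rw [hunion]
        constructor
        · intro p hp
          obtain ⟨w, _, hpw⟩ := Finset.mem_biUnion.1 hp
          exact copies_subset w hpw
        · intro j'
          rw [embed_filter_card hSU j']
          exact hfair j'
      obtain ⟨Xh, hXhS, hXdisj, hXind⟩ := hrep.2 Y hYsub hYcard
        ⟨copies U B u, ⟨u, hu, rfl, hucard⟩, hdisj, hind⟩
      obtain ⟨v, hvF, rfl, hvcard⟩ := hrep.1 hXhS
      have hvu : v ≠ u := by
        rintro rfl; exact hunot hXhS
      have hvU : v ∈ U := hFsub i hvF
      have hvne : (copies U B v).Nonempty := Finset.card_pos.1 (hvcard ▸ hj1)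
      have hvS : v ∉ S.erase u := by
        intro hvmem
        obtain ⟨p, hp⟩ := hvne
        have hpY : p ∈ Y := Finset.mem_biUnion.2 ⟨v, hvmem, hp⟩
        exact Finset.disjoint_left.1 hXdisj hp hpY
      have hunion' : copies U B v ∪ Y = (insert v (S.erase u)).biUnion (copies U B) := by
        rw [hYdef, Finset.biUnion_insert]
      have hS'U : insert v (S.erase u) ⊆ U := by
        intro w hw
        rcases Finset.mem_insert.1 hw with rfl | hw'
        · exact hvU
        · exact hSerU hw'
      refine ⟨insert v (S.erase u), ?_, ?_, ?_, ?_⟩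
      · intro w hw
        rcases Finset.mem_insert.1 hw with rfl | hw'
        · exact Finset.mem_erase.2 ⟨hvu, hvU⟩
        · exact Finset.mem_erase.2 ⟨Finset.ne_of_mem_erase hw', hSerU hw'⟩
      · calc (insert v (S.erase u)).card ≤ (S.erase u).card + 1 :=
              Finset.card_insert_le _ _
          _ = S.card - 1 + 1 := by rw [Finset.card_erase_of_mem huS]
          _ = S.card := Nat.succ_pred_eq_of_pos (Finset.card_pos.2 ⟨u, huS⟩)
          _ ≤ k := hSk
      · intro a
        by_cases hai : a = i
        · subst hai
          exact ⟨v, Finset.mem_inter.2 ⟨Finset.mem_insert_self _ _,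
            Finset.mem_erase.2 ⟨hvu, hvF⟩⟩⟩
        · obtain ⟨w, hw⟩ := hhit a
          obtain ⟨hwS, hwF⟩ := Finset.mem_inter.1 hw
          have hwu : w ≠ u := by
            rintro rfl
            exact (Finset.disjoint_left.1 (hFdisj a i hai) hwF) hu
          exact ⟨w, Finset.mem_inter.2 ⟨Finset.mem_insert_of_mem
            (Finset.mem_erase.2 ⟨hwu, hwS⟩), Finset.mem_erase.2 ⟨hwu, hwF⟩⟩⟩
      · intro j'
        have hle := hXind.2 j'
        rw [hunion', embed_filter_card hS'U j'] at hle
        calc (insert v (S.erase u) ∩ (B j').erase u).card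
            ≤ (insert v (S.erase u) ∩ B j').card :=
              Finset.card_le_card (Finset.inter_subset_inter (Finset.Subset.refl _) (Finset.erase_subset _ _))
          _ ≤ f j' := hle
    · -- u ∉ S: S itself works
      refine ⟨S, ?_, hSk, ?_, ?_⟩
      · intro w hw
        exact Finset.mem_erase.2 ⟨fun h => huS (h ▸ hw), hSU hw⟩
      · intro a
        obtain ⟨w, hw⟩ := hhit a
        obtain ⟨hwS, hwF⟩ := Finset.mem_inter.1 hw
        exact ⟨w, Finset.mem_inter.2 ⟨hwS,
          Finset.mem_erase.2 ⟨fun h => huS (h ▸ hwS), hwF⟩⟩⟩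
      · intro j'
        calc (S ∩ (B j').erase u).card ≤ (S ∩ B j').card :=
              Finset.card_le_card (Finset.inter_subset_inter (Finset.Subset.refl _) (Finset.erase_subset _ _))
          _ ≤ f j' := hfair j'
  · rintro ⟨S, hSU, hSk, hhit, hfair⟩
    have huS : u ∉ S := fun h => (Finset.mem_erase.1 (hSU h)).1 rfl
    refine ⟨S, hSU.trans (Finset.erase_subset _ _), hSk, ?_, ?_⟩
    · intro a
      obtain ⟨w, hw⟩ := hhit a
      obtain ⟨hwS, hwF⟩ := Finset.mem_inter.1 hw
      exact ⟨w, Finset.mem_inter.2 ⟨hwS, Finset.mem_of_mem_erase hwF⟩⟩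
    · intro j'
      have : S ∩ B j' = S ∩ (B j').erase u := by
        ext w
        simp only [Finset.mem_inter, Finset.mem_erase]
        exact ⟨fun ⟨h1, h2⟩ => ⟨h1, fun h => huS (h ▸ h1), h2⟩,
          fun ⟨h1, _, h3⟩ => ⟨h1, h3⟩⟩
      rw [this]
      exact hfair j'
end

section
/- Let d ≥ 2 and k ≥ 1, and let (U, F) be a finite set system whose incidence graph is K_{d,d}-free. If some element u ∈ U belongs to at least d·k^{d−1} sets of F, then there exists a set X ⊆ U with 1 ≤ |X| ≤ d−1 such that |⋂_{v ∈ X} F(v)| ≥ d·k^{d−|X|} and every set S ⊆ U with |S| ≤ k that intersects every member of F satisfies S ∩ X ≠ ∅. -/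
/-- The incidence graph of the set system (U, F) is K_{d,d}-free: there are no
`d` distinct elements of `U` and `d` distinct sets of `F` with every one of these
elements belonging to every one of these sets. -/
def KddFree {α : Type*} [DecidableEq α] (U : Finset α) (F : Finset (Finset α)) (d : ℕ) : Prop :=
  ¬ ∃ (A : Finset α) (G : Finset (Finset α)), A ⊆ U ∧ G ⊆ F ∧
      A.card = d ∧ G.card = d ∧ ∀ u ∈ A, ∀ F' ∈ G, u ∈ F'

/-- If some element belongs to at least d·k^{d−1} sets of a K_{d,d}-free set system,
then there is a set X of at most d−1 elements, with at least d·k^{d−|X|} common sets,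
that intersects every hitting set of size at most k. -/
theorem stmt_5 {α : Type*} [DecidableEq α]
    (U : Finset α) (F : Finset (Finset α)) (d k : ℕ)
    (hd : 2 ≤ d) (hk : 1 ≤ k)
    (hFsub : ∀ F' ∈ F, F' ⊆ U)
    (hfree : KddFree U F d)
    (u : α) (hu : u ∈ U)
    (hdeg : d * k ^ (d - 1) ≤ (F.filter fun F' => u ∈ F').card) :
    ∃ X : Finset α, X ⊆ U ∧ 1 ≤ X.card ∧ X.card ≤ d - 1 ∧
      d * k ^ (d - X.card) ≤ (F.filter fun F' => ∀ v ∈ X, v ∈ F').card ∧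
      ∀ S : Finset α, S ⊆ U → S.card ≤ k →
        (∀ F' ∈ F, (S ∩ F').Nonempty) → (S ∩ X).Nonempty := by
  set C : Finset (Finset α) := U.powerset.filter (fun X =>
    1 ≤ X.card ∧ X.card ≤ d - 1 ∧
    d * k ^ (d - X.card) ≤ (F.filter fun F' => ∀ v ∈ X, v ∈ F').card) with hC
  have hmemC : ∀ X, X ∈ C ↔ X ⊆ U ∧ 1 ≤ X.card ∧ X.card ≤ d - 1 ∧
      d * k ^ (d - X.card) ≤ (F.filter fun F' => ∀ v ∈ X, v ∈ F').card := by
    intro X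
    simp [hC, Finset.mem_filter, Finset.mem_powerset, and_assoc]
  have hCne : C.Nonempty := by
    refine ⟨{u}, (hmemC _).2 ?_⟩
    refine ⟨by simpa using hu, by simp, ?_, ?_⟩
    · simp only [Finset.card_singleton]; omega
    · simpa using hdeg
  obtain ⟨X, hXC, hXmax⟩ := C.exists_max_image Finset.card hCne
  obtain ⟨hXU, hX1, hXd, hXdeg⟩ := (hmemC X).1 hXC
  refine ⟨X, hXU, hX1, hXd, hXdeg, ?_⟩
  intro S hSU hSk hhit
  by_contra hSX
  rw [Finset.not_nonempty_iff_eq_empty] at hSX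
  set G : Finset (Finset α) := F.filter (fun F' => ∀ v ∈ X, v ∈ F') with hG
  have hGdeg : d * k ^ (d - X.card) ≤ G.card := hXdeg
  -- every F' in G is hit by S
  have hcover : G ⊆ S.biUnion (fun v => G.filter (fun F' => v ∈ F')) := by
    intro F' hF'
    obtain ⟨s, hs⟩ := hhit F' (Finset.mem_filter.1 hF').1
    rw [Finset.mem_inter] at hs
    exact Finset.mem_biUnion.2 ⟨s, hs.1, Finset.mem_filter.2 ⟨hF', hs.2⟩⟩
  have hsum : G.card ≤ ∑ v ∈ S, (G.filter (fun F' => v ∈ F')).card :=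
    le_trans (Finset.card_le_card hcover) (Finset.card_biUnion_le)
  -- pigeonhole: some v ∈ S with big filter
  have hpow : k ^ (d - X.card) = k * k ^ (d - X.card - 1) := by
    have h : d - X.card = (d - X.card - 1) + 1 := by omega
    conv_lhs => rw [h]
    rw [pow_succ, mul_comm]
  set B := d * k ^ (d - X.card - 1) with hB
  have hBpos : 1 ≤ B := by
    rw [hB]
    exact Nat.mul_pos (by omega) (pow_pos (by omega : 0 < k) _)
  have hexv : ∃ v ∈ S, B ≤ (G.filter (fun F' => v ∈ F')).card := by
    by_contra h
    push_neg at h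
    have h2 : ∑ v ∈ S, (G.filter (fun F' => v ∈ F')).card ≤ ∑ _v ∈ S, (B - 1) :=
      Finset.sum_le_sum (fun v hv => by have := h v hv; omega)
    have h3 : ∑ _v ∈ S, (B - 1) = S.card * (B - 1) := by
      rw [Finset.sum_const, smul_eq_mul]
    have h4 : S.card * (B - 1) ≤ k * (B - 1) := Nat.mul_le_mul_right _ hSk
    have h5 : k * (B - 1) + k = k * B := by
      rw [← Nat.mul_succ]; congr 1; omega
    have h6 : k * B = d * k ^ (d - X.card) := by rw [hB, hpow]; ring
    omega
  obtain ⟨v, hvS, hvB⟩ := hexv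
  have hvX : v ∉ X := by
    intro hvX
    have : v ∈ S ∩ X := Finset.mem_inter.2 ⟨hvS, hvX⟩
    simp [hSX] at this
  set X' : Finset α := insert v X with hX'
  have hX'card : X'.card = X.card + 1 := Finset.card_insert_of_notMem hvX
  have hX'U : X' ⊆ U := Finset.insert_subset (hSU hvS) hXU
  have hfilter_eq : G.filter (fun F' => v ∈ F') =
      F.filter (fun F' => ∀ w ∈ X', w ∈ F') := by
    ext F'
    constructor
    · intro hmem
      rw [Finset.mem_filter] at hmem ⊢
      obtain ⟨hmemG, h3⟩ := hmem
      rw [hG, Finset.mem_filter] at hmemG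
      refine ⟨hmemG.1, ?_⟩
      intro w hw
      rw [hX', Finset.mem_insert] at hw
      rcases hw with rfl | hw
      · exact h3
      · exact hmemG.2 w hw
    · intro hmem
      rw [Finset.mem_filter] at hmem ⊢
      refine ⟨?_, hmem.2 v (by rw [hX']; exact Finset.mem_insert_self v X)⟩
      rw [hG, Finset.mem_filter]
      exact ⟨hmem.1, fun w hw => hmem.2 w (by rw [hX']; exact Finset.mem_insert_of_mem hw)⟩
  rcases Nat.lt_or_ge X'.card d with hlt | hge
  · -- X' is a bigger candidate: contradiction with maximality
    have hX'C : X' ∈ C := by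
      refine (hmemC _).2 ⟨hX'U, by omega, by omega, ?_⟩
      have h : d - X'.card = d - X.card - 1 := by omega
      rw [h, ← hfilter_eq]
      exact hvB
    have := hXmax X' hX'C
    omega
  · -- X'.card = d : build a K_{d,d}
    have hX'd : X'.card = d := by omega
    have hBd : d ≤ (G.filter (fun F' => v ∈ F')).card := by
      have h : d - X.card - 1 = 0 := by omega
      rw [hB, h] at hvB
      simpa using hvB
    obtain ⟨G', hG'sub, hG'card⟩ := Finset.exists_subset_card_eq hBd
    refine hfree ⟨X', G', hX'U, ?_, hX'd, hG'card, ?_⟩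
    · intro F' hF'
      have h := hG'sub hF'
      rw [hfilter_eq] at h
      exact (Finset.mem_filter.1 h).1
    · intro w hw F' hF'
      have h := hG'sub hF'
      rw [hfilter_eq] at h
      exact (Finset.mem_filter.1 h).2 w hw
end

section
/- Let (U, F, B, f, k) be a Fair Hitting Set instance and let X ⊆ U be a set that intersects every fair hitting set of this instance. Let F' = {F' ∈ F : X ⊄ F'} ∪ {X}, i.e. F with every set containing X deleted and the set X added. Then (U, F, B, f, k) admits a fair hitting set if and only if (U, F', B, f, k) admits a fair hitting set. -/
/-- `S` is a fair hitting set for the instance (U, F, B, f, k). -/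
def IsFairHS {α : Type*} [DecidableEq α] (U : Finset α) (F B : Finset (Finset α))
    (f : Finset α → ℕ) (k : ℕ) (S : Finset α) : Prop :=
  S ⊆ U ∧ S.card ≤ k ∧ (∀ F' ∈ F, (S ∩ F').Nonempty) ∧ ∀ B' ∈ B, (S ∩ B').card ≤ f B'

/-- If `X` intersects every fair hitting set, then replacing all supersets of `X`
in `F` by the single set `X` yields an equivalent instance. -/
theorem stmt_7 {α : Type*} [DecidableEq α]
    (U : Finset α) (F B : Finset (Finset α)) (f : Finset α → ℕ) (k : ℕ)
    (X : Finset α) (hX : X ⊆ U)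
    (hhit : ∀ S : Finset α, IsFairHS U F B f k S → (S ∩ X).Nonempty) :
    (∃ S, IsFairHS U F B f k S) ↔
    (∃ S, IsFairHS U ((F.filter fun F' => ¬ X ⊆ F') ∪ {X}) B f k S) := by
  constructor
  · rintro ⟨S, hS⟩
    refine ⟨S, hS.1, hS.2.1, ?_, hS.2.2.2⟩
    intro F' hF'
    rcases Finset.mem_union.1 hF' with h | h
    · exact hS.2.2.1 F' (Finset.mem_filter.1 h).1
    · simp only [Finset.mem_singleton] at h
      subst h
      exact hhit S hS
  · rintro ⟨S, hS⟩
    refine ⟨S, hS.1, hS.2.1, ?_, hS.2.2.2⟩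
    intro F' hF'
    by_cases hXF : X ⊆ F'
    · have hx : (S ∩ X).Nonempty :=
        hS.2.2.1 X (Finset.mem_union_right _ (Finset.mem_singleton_self X))
      exact hx.mono (Finset.inter_subset_inter_left hXF)
    · exact hS.2.2.1 F' (Finset.mem_union_left _ (Finset.mem_filter.2 ⟨hF', hXF⟩))
end

section
/- Let (U, F, B, f, k) be a Fair Hitting Set instance in which every element of U belongs to at most q sets of the indexed family B = (B_1, …, B_ℓ). Pad the construction so that every element has exactly q copies: let copies(u) be a set of q formal copies of u; for each j ∈ [ℓ] with u ∈ B_j place one distinct copy of u into B̃_j, and place the remaining copies of u into an extra block B̃*; the blocks B̃_1, …, B̃_ℓ, B̃* partition Ũ = ⋃_{u ∈ U} copies(u), and call X ⊆ Ũ independent (in the padded partition matroid M) if |X ∩ B̃_j| ≤ f(B_j) for all j ∈ [ℓ] and |X ∩ B̃*| ≤ kq. Fix a subfamily Y ⊆ F, let ExactNbr(Y) = {u ∈ U : F(u) = Y} and P_Y = {copies(u) : u ∈ ExactNbr(Y)}, and let P̂ be a (kq − q)-representative family for P_Y with respect to M. If u ∈ ExactNbr(Y) satisfies copies(u) ∉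 P̂, then (U, F, B, f, k) admits a fair hitting set if and only if the instance obtained by deleting u from U and from every set of F and of B (with f unchanged on corresponding sets and the same k) admits a fair hitting set. -/
variable {α : Type*} [DecidableEq α]

/-- The padded ground set Ũ: every element of `U` gets exactly `q` formal copies. -/
def tildeUq (U : Finset α) (q : ℕ) : Finset (α × Fin q) :=
  U ×ˢ Finset.univ

/-- `copies u`: the `q` formal copies of `u`. -/
def copiesq (q : ℕ) (u : α) : Finset (α × Fin q) :=
  ({u} : Finset α) ×ˢ Finset.univ

/-- Independence in the padded partition matroid: the copies assigned (by `blk`) to block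
`B̃_j` contribute at most `f j`, and the copies assigned to the extra block `B̃*`
(value `none`) contribute at most `k·q`. -/
def PadIndep (U : Finset α) {ℓ q : ℕ} (f : Fin ℓ → ℕ) (k : ℕ)
    (blk : α → Fin q → Option (Fin ℓ)) (X : Finset (α × Fin q)) : Prop :=
  X ⊆ tildeUq U q ∧
    (∀ j : Fin ℓ, (X.filter fun p => blk p.1 p.2 = some j).card ≤ f j) ∧
    (X.filter fun p => blk p.1 p.2 = none).card ≤ k * q

lemma count_aux {ℓ q : ℕ} (U : Finset α) (B : Fin ℓ → Finset α)
    (blk : α → Fin q → Option (Fin ℓ))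
    (hblk1 : ∀ v ∈ U, ∀ j : Fin ℓ, v ∈ B j → ∃! c : Fin q, blk v c = some j)
    (hblk2 : ∀ v ∈ U, ∀ (c : Fin q) (j : Fin ℓ), blk v c = some j → v ∈ B j)
    (S : Finset α) (hS : S ⊆ U) (j : Fin ℓ) :
    ((S ×ˢ (Finset.univ : Finset (Fin q))).filter fun p => blk p.1 p.2 = some j).card
      = (S ∩ B j).card := by
  apply Finset.card_bij (fun p _ => p.1)
  · intro p hp
    simp only [Finset.mem_filter, Finset.mem_product] at hp
    exact Finset.mem_inter.2 ⟨hp.1.1, hblk2 p.1 (hS hp.1.1) p.2 j hp.2⟩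
  · intro p1 hp1 p2 hp2 h
    simp only [Finset.mem_filter, Finset.mem_product] at hp1 hp2
    obtain ⟨c, hc, huniq⟩ := hblk1 p1.1 (hS hp1.1.1) j (hblk2 p1.1 (hS hp1.1.1) p1.2 j hp1.2)
    have h1 := huniq p1.2 hp1.2
    have h2 := huniq p2.2 (h ▸ hp2.2)
    exact Prod.ext h (h1.trans h2.symm)
  · intro w hw
    obtain ⟨hwS, hwB⟩ := Finset.mem_inter.1 hw
    obtain ⟨c, hc, -⟩ := hblk1 w (hS hwS) j hwB
    exact ⟨(w, c), by simp [Finset.mem_filter, Finset.mem_product, hwS, hc], rfl⟩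

lemma union_copies {q : ℕ} (a : α) (T : Finset α) :
    copiesq q a ∪ T ×ˢ (Finset.univ : Finset (Fin q)) = (insert a T) ×ˢ Finset.univ := by
  ext ⟨x, c⟩
  simp [copiesq, Finset.mem_union, Finset.mem_product, Finset.mem_insert, eq_comm]

/-- Soundness of the reduction rule in the padded partition matroid: if
`copies u ∉ P̂` for a `(kq − q)`-representative family `P̂` of
`P_Y = {copies v : v ∈ ExactNbr(Y)}`, then `u` may be deleted. -/
theorem stmt_8 {ℓ : ℕ} (U : Finset α) (F : Finset (Finset α))
    (B : Fin ℓ → Finset α) (f : Fin ℓ → ℕ) (k q : ℕ)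
    (hFsub : ∀ F' ∈ F, F' ⊆ U) (hBsub : ∀ j, B j ⊆ U)
    (hq : ∀ v ∈ U, (Finset.univ.filter fun j : Fin ℓ => v ∈ B j).card ≤ q)
    (blk : α → Fin q → Option (Fin ℓ))
    (hblk1 : ∀ v ∈ U, ∀ j : Fin ℓ, v ∈ B j → ∃! c : Fin q, blk v c = some j)
    (hblk2 : ∀ v ∈ U, ∀ (c : Fin q) (j : Fin ℓ), blk v c = some j → v ∈ B j)
    (Y : Finset (Finset α)) (hY : Y ⊆ F)
    (Phat : Set (Finset (α × Fin q)))
    (hrep : IsRepFam (tildeUq U q) (PadIndep U f k blk) (k * q - q) Phat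
        {X | ∃ v ∈ U, (F.filter fun F' => v ∈ F') = Y ∧ X = copiesq q v})
    (u : α) (hu : u ∈ U) (huY : (F.filter fun F' => u ∈ F') = Y)
    (hunot : copiesq q u ∉ Phat) :
    (∃ S : Finset α, S ⊆ U ∧ S.card ≤ k ∧ (∀ F' ∈ F, (S ∩ F').Nonempty) ∧
        ∀ j, (S ∩ B j).card ≤ f j) ↔
    (∃ S : Finset α, S ⊆ U.erase u ∧ S.card ≤ k ∧
        (∀ F' ∈ F.image (fun F' => F'.erase u), (S ∩ F').Nonempty) ∧
        ∀ j, (S ∩ (B j).erase u).card ≤ f j) := by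
  rcases Nat.eq_zero_or_pos q with hq0 | hq0
  · -- q = 0 : contradiction from representativity
    subst hq0
    exfalso
    have hcop : ∀ v : α, copiesq 0 v = ∅ := by
      intro v; apply Finset.eq_empty_of_forall_notMem; intro p; exact absurd p.2.2 (Nat.not_lt_zero _)
    obtain ⟨Xhat, hXP, -, -⟩ := hrep.2 ∅ (Finset.empty_subset _) (by simp)
      ⟨copiesq 0 u, ⟨u, hu, huY, rfl⟩, Finset.disjoint_empty_right _, by
        rw [Finset.union_empty, hcop]
        exact ⟨Finset.empty_subset _, fun j => by simp, by simp⟩⟩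
    obtain ⟨v, -, -, rfl⟩ := hrep.1 hXP
    rw [hcop] at hXP
    rw [hcop] at hunot
    exact hunot hXP
  constructor
  · rintro ⟨S, hSU, hSk, hhit, hbud⟩
    by_cases huS : u ∈ S
    · -- exchange u for some v with copies v ∈ Phat
      set T := S.erase u with hT
      have hTS : T ⊆ S := Finset.erase_subset _ _
      have hTU : T ⊆ U := hTS.trans hSU
      have huT : u ∉ T := Finset.notMem_erase _ _
      have hScard : 1 ≤ S.card := Finset.card_pos.2 ⟨u, huS⟩
      have hTcard : T.card = S.card - 1 := Finset.card_erase_of_mem huS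
      set Y' : Finset (α × Fin q) := T ×ˢ Finset.univ with hY'
      have hY'sub : Y' ⊆ tildeUq U q := Finset.product_subset_product_left hTU
      have hY'card : Y'.card ≤ k * q - q := by
        rw [hY', Finset.card_product, Finset.card_univ, Fintype.card_fin]
        calc T.card * q ≤ (k - 1) * q := by
              apply Nat.mul_le_mul_right
              omega
          _ = k * q - q := by rw [Nat.sub_mul, one_mul]
      have hSpad : PadIndep U f k blk (S ×ˢ Finset.univ) := by
        refine ⟨Finset.product_subset_product_left hSU, fun j => ?_, ?_⟩
        · rw [count_aux U B blk hblk1 hblk2 S hSU j]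
          exact hbud j
        · calc ((S ×ˢ Finset.univ).filter fun p => blk p.1 p.2 = none).card
              ≤ (S ×ˢ (Finset.univ : Finset (Fin q))).card := Finset.card_filter_le _ _
            _ = S.card * q := by rw [Finset.card_product, Finset.card_univ, Fintype.card_fin]
            _ ≤ k * q := Nat.mul_le_mul_right _ hSk
      have hdisj : Disjoint (copiesq q u) Y' := by
        rw [Finset.disjoint_left]
        intro p hp hp'
        simp only [copiesq, Finset.mem_product, Finset.mem_singleton] at hp
        simp only [hY', Finset.mem_product] at hp'
        exact huT (hp.1 ▸ hp'.1)
      obtain ⟨Xhat, hXP, hdisj2, hind2⟩ := hrep.2 Y' hY'sub hY'card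
        ⟨copiesq q u, ⟨u, hu, huY, rfl⟩, hdisj, by
          rw [union_copies, Finset.insert_erase huS]; exact hSpad⟩
      obtain ⟨v, hvU, hvY, rfl⟩ := hrep.1 hXP
      have hvu : v ≠ u := fun h => hunot (h ▸ hXP)
      have hvT : v ∉ T := by
        intro hvT
        have h1 : (v, (⟨0, hq0⟩ : Fin q)) ∈ copiesq q v := by
          simp [copiesq]
        have h2 : (v, (⟨0, hq0⟩ : Fin q)) ∈ Y' := by
          simp [hY', Finset.mem_product, hvT]
        exact Finset.disjoint_left.1 hdisj2 h1 h2
      refine ⟨insert v T, ?_, ?_, ?_, ?_⟩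
      · intro w hw
        rcases Finset.mem_insert.1 hw with rfl | hw
        · exact Finset.mem_erase.2 ⟨hvu, hvU⟩
        · exact Finset.mem_erase.2 ⟨(Finset.mem_erase.1 hw).1, hTU hw⟩
      · calc (insert v T).card ≤ T.card + 1 := Finset.card_insert_le _ _
          _ ≤ S.card := by omega
          _ ≤ k := hSk
      · intro F'' hF''
        obtain ⟨F', hF', rfl⟩ := Finset.mem_image.1 hF''
        obtain ⟨w, hw⟩ := hhit F' hF'
        obtain ⟨hwS, hwF⟩ := Finset.mem_inter.1 hw
        by_cases hwu : w = u
        · subst hwu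
          have hFY : F' ∈ Y := by
            rw [← huY]; exact Finset.mem_filter.2 ⟨hF', hwF⟩
          have hvF : v ∈ F' := by
            rw [← hvY] at hFY
            exact (Finset.mem_filter.1 hFY).2
          exact ⟨v, Finset.mem_inter.2 ⟨Finset.mem_insert_self _ _,
            Finset.mem_erase.2 ⟨hvu, hvF⟩⟩⟩
        · exact ⟨w, Finset.mem_inter.2 ⟨Finset.mem_insert_of_mem (Finset.mem_erase.2 ⟨hwu, hwS⟩),
            Finset.mem_erase.2 ⟨hwu, hwF⟩⟩⟩
      · intro j
        have hsub : insert v T ∩ (B j).erase u ⊆ insert v T ∩ B j :=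
          Finset.inter_subset_inter le_rfl (Finset.erase_subset _ _)
        have hS'U : insert v T ⊆ U := Finset.insert_subset hvU hTU
        have := hind2.2.1 j
        rw [union_copies] at this
        rw [count_aux U B blk hblk1 hblk2 (insert v T) hS'U j] at this
        exact le_trans (Finset.card_le_card hsub) this
    · -- u not in S: S itself works
      refine ⟨S, Finset.subset_erase.2 ⟨hSU, huS⟩, hSk, ?_, ?_⟩
      · intro F'' hF''
        obtain ⟨F', hF', rfl⟩ := Finset.mem_image.1 hF''
        obtain ⟨w, hw⟩ := hhit F' hF'
        obtain ⟨hwS, hwF⟩ := Finset.mem_inter.1 hw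
        exact ⟨w, Finset.mem_inter.2 ⟨hwS, Finset.mem_erase.2 ⟨fun h => huS (h ▸ hwS), hwF⟩⟩⟩
      · intro j
        exact le_trans (Finset.card_le_card
          (Finset.inter_subset_inter le_rfl (Finset.erase_subset _ _))) (hbud j)
  · rintro ⟨S, hSU, hSk, hhit, hbud⟩
    have huS : u ∉ S := fun h => (Finset.mem_erase.1 (hSU h)).1 rfl
    refine ⟨S, hSU.trans (Finset.erase_subset _ _), hSk, ?_, ?_⟩
    · intro F' hF'
      obtain ⟨w, hw⟩ := hhit (F'.erase u) (Finset.mem_image_of_mem _ hF')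
      obtain ⟨hwS, hwF⟩ := Finset.mem_inter.1 hw
      exact ⟨w, Finset.mem_inter.2 ⟨hwS, (Finset.mem_erase.1 hwF).2⟩⟩
    · intro j
      refine le_trans (Finset.card_le_card fun w hw => ?_) (hbud j)
      obtain ⟨hwS, hwB⟩ := Finset.mem_inter.1 hw
      exact Finset.mem_inter.2 ⟨hwS, Finset.mem_erase.2 ⟨fun h => huS (h ▸ hwS), hwB⟩⟩
end

section
/- Let (U, F, B, f, k) be a Fair Hitting Set instance and let U_1, …, U_{k+1} be a partition of U into k+1 (possibly empty) parts. Then (U, F, B, f, k) admits a fair hitting set if and only if there exists j ∈ [k+1] such that the instance (U \ U_j, {F' \ U_j : F' ∈ F}, (B' \ U_j)_{B' ∈ B}, f', k) admits a fair hitting set, where f'(B' \ U_j) = f(B') for each B' ∈ B. -/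
/-- For any partition of the universe into k+1 parts, the instance has a fair hitting
set iff for some part `P a`, the instance obtained by deleting the elements of `P a`
everywhere has a fair hitting set. -/
theorem stmt_12 {α : Type*} [DecidableEq α] {ℓ : ℕ}
    (U : Finset α) (F : Finset (Finset α)) (B : Fin ℓ → Finset α) (f : Fin ℓ → ℕ)
    (k : ℕ) (P : Fin (k + 1) → Finset α)
    (hdisj : ∀ a b, a ≠ b → Disjoint (P a) (P b))
    (hcover : Finset.univ.biUnion P = U) :
    (∃ S : Finset α, S ⊆ U ∧ S.card ≤ k ∧ (∀ F' ∈ F, (S ∩ F').Nonempty) ∧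
        ∀ j, (S ∩ B j).card ≤ f j) ↔
    (∃ a : Fin (k + 1), ∃ S : Finset α, S ⊆ U \ P a ∧ S.card ≤ k ∧
        (∀ F' ∈ F.image fun F' => F' \ P a, (S ∩ F').Nonempty) ∧
        ∀ j, (S ∩ (B j \ P a)).card ≤ f j) := by
  classical
  constructor
  · rintro ⟨S, hSU, hcard, hF, hB⟩
    set g : α → Fin (k + 1) := fun x => if h : ∃ a, x ∈ P a then h.choose else 0 with hg
    have hgmem : ∀ x a, x ∈ P a → g x = a := by
      intro x a hx
      have h : ∃ b, x ∈ P b := ⟨a, hx⟩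
      simp only [hg, dif_pos h]
      by_contra hne
      exact Finset.disjoint_left.mp (hdisj _ _ hne) h.choose_spec hx
    have hsub : Finset.univ.filter (fun a : Fin (k + 1) => (S ∩ P a).Nonempty) ⊆ S.image g := by
      intro a ha
      simp only [Finset.mem_filter] at ha
      obtain ⟨x, hx⟩ := ha.2
      rw [Finset.mem_inter] at hx
      exact Finset.mem_image.mpr ⟨x, hx.1, hgmem x a hx.2⟩
    have hlt : (Finset.univ.filter (fun a : Fin (k + 1) => (S ∩ P a).Nonempty)).card < k + 1 :=
      lt_of_le_of_lt ((Finset.card_le_card hsub).trans (Finset.card_image_le.trans hcard))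
        (Nat.lt_succ_self k)
    obtain ⟨a, ha⟩ : ∃ a : Fin (k + 1), ¬ (S ∩ P a).Nonempty := by
      by_contra h
      push_neg at h
      have heq : Finset.univ.filter (fun a : Fin (k + 1) => (S ∩ P a).Nonempty) = Finset.univ := by
        ext a; simp [h a]
      rw [heq] at hlt
      simp at hlt
    have hdisjS : ∀ x ∈ S, x ∉ P a := fun x hxS hxP =>
      ha ⟨x, Finset.mem_inter.mpr ⟨hxS, hxP⟩⟩
    refine ⟨a, S, fun x hx => Finset.mem_sdiff.mpr ⟨hSU hx, hdisjS x hx⟩, hcard, ?_, ?_⟩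
    · intro F' hF'
      simp only [Finset.mem_image] at hF'
      obtain ⟨F'', hF'', rfl⟩ := hF'
      obtain ⟨x, hx⟩ := hF F'' hF''
      rw [Finset.mem_inter] at hx
      exact ⟨x, Finset.mem_inter.mpr ⟨hx.1, Finset.mem_sdiff.mpr ⟨hx.2, hdisjS x hx.1⟩⟩⟩
    · intro j
      refine le_trans (Finset.card_le_card ?_) (hB j)
      intro x hx
      rw [Finset.mem_inter, Finset.mem_sdiff] at hx
      exact Finset.mem_inter.mpr ⟨hx.1, hx.2.1⟩
  · rintro ⟨a, S, hSU, hcard, hF', hB'⟩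
    have hSP : ∀ x ∈ S, x ∉ P a := fun x hx => (Finset.mem_sdiff.mp (hSU hx)).2
    refine ⟨S, fun x hx => (Finset.mem_sdiff.mp (hSU hx)).1, hcard, ?_, ?_⟩
    · intro F'' hF''
      obtain ⟨x, hx⟩ := hF' _ (Finset.mem_image_of_mem _ hF'')
      rw [Finset.mem_inter, Finset.mem_sdiff] at hx
      exact ⟨x, Finset.mem_inter.mpr ⟨hx.1, hx.2.1⟩⟩
    · intro j
      refine le_trans (Finset.card_le_card ?_) (hB' j)
      intro x hx
      rw [Finset.mem_inter] at hx
      exact Finset.mem_inter.mpr ⟨hx.1, Finset.mem_sdiff.mpr ⟨hx.2, hSP x hx.1⟩⟩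
end
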